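/- arXiv:2012.07977 — 4 statements merged into one kernel-verified Lean document; each statement's English description precedes it below -/
import Mathlib

section
/- Let $C_X, C_Y$ be symmetric positive semidefinite $D \times D$ matrices with descending eigenvalues $\mu_1 \geq \cdots \geq \mu_D$ and $\rho_1 \geq \cdots \geq \rho_D$, and fix $1 \leq d \leq D$. If there exists an index $k$ with $1 \leq k \leq D - d + 1$ such that $\gamma < \mu_{d+k-1} / \rho_k$, then the $d$-th largest eigenvalue of $C = C_X - \gamma C_Y$ is positive. -/
/-!
Weyl's inequality, proved through subspaces of eigenvectors. With all indices `0`-based, the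
eigenvectors of `C_X` for eigenvalues `≥ μ_{d+k}` span at least `d + k + 1` dimensions, those of
`C_Y` for eigenvalues `≤ ρ_k` at least `D - k`, and those of `C = C_X - γ C_Y` for eigenvalues
`≤ λ_d` at least `D - d`. As `(d + k + 1) + (D - k) + (D - d) > 2D`, the three subspaces share a
nonzero vector `x`, and comparing the quadratic forms at `x` gives `μ_{d+k} ≤ λ_d + γ ρ_k`.
Positive semidefiniteness of `C_Y` makes `ρ_k > 0` (otherwise `μ_{d+k} / ρ_k = 0 ≤ γ`), so the
hypothesis reads `γ ρ_k < μ_{d+k}`.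
-/

open Matrix Finset Module
open scoped RealInnerProductSpace

namespace Submodule

variable {K V : Type*} [DivisionRing K] [AddCommGroup V] [Module K V] [FiniteDimensional K V]

lemma finrank_add_finrank_le_finrank_inf_add (s t : Submodule K V) :
    finrank K s + finrank K t ≤ finrank K ↥(s ⊓ t) + finrank K V := by
  rw [← finrank_sup_add_finrank_inf_eq, add_comm (finrank K ↥(s ⊔ t))]
  exact Nat.add_le_add_left (finrank_le _) _

lemma exists_mem_inf_inf_ne_zero_of_finrank_add_gt (s t u : Submodule K V)
    (h : 2 * finrank K V < finrank K s + finrank K t + finrank K u) :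
    ∃ x ∈ s ⊓ t ⊓ u, x ≠ 0 := by
  refine exists_mem_ne_zero_of_ne_bot fun hbot => ?_
  have hst := finrank_add_finrank_le_finrank_inf_add s t
  have hstu := finrank_add_finrank_le_finrank_inf_add (s ⊓ t) u
  rw [hbot, finrank_bot] at hstu
  omega

end Submodule

namespace OrthonormalBasis

variable {ι E : Type*} [Fintype ι] [NormedAddCommGroup E] [InnerProductSpace ℝ E]
  (b : OrthonormalBasis ι ℝ E)

lemma repr_eq_zero_of_mem_span_image {s : Set ι} {x : E} (hx : x ∈ Submodule.span ℝ (b '' s))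
    {i : ι} (hi : i ∉ s) : b.repr x i = 0 := by
  rw [← b.coe_toBasis, Basis.mem_span_image] at hx
  by_contra h
  exact hi (hx (Finsupp.mem_support_iff.mpr (by rwa [b.coe_toBasis_repr_apply])))

lemma norm_sq_eq_sum_repr_sq (x : E) : ‖x‖ ^ 2 = ∑ i, b.repr x i ^ 2 := by
  rw [← b.repr.norm_map, EuclideanSpace.norm_sq_eq]
  simp

lemma inner_map_self_eq_sum {T : E →ₗ[ℝ] E} {ev : ι → ℝ} (hT : ∀ i, T (b i) = ev i • b i)
    (x : E) :
    ⟪x, T x⟫ = ∑ i, ev i * b.repr x i ^ 2 := by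
  have hrepr : ∀ i, b.repr (T x) i = ev i * b.repr x i := by
    classical
    intro i
    conv_lhs => rw [← b.sum_repr x]
    simp [hT, b.repr_self, Pi.single_apply, mul_comm]
  rw [← b.sum_inner_mul_inner]
  refine Finset.sum_congr rfl fun i _ => ?_
  rw [← b.repr_apply_apply, hrepr, real_inner_comm, ← b.repr_apply_apply]
  ring

lemma finrank_span_image (s : Finset ι) :
    finrank ℝ (Submodule.span ℝ (b '' s)) = #s := by
  have li : LinearIndependent ℝ (fun i : (s : Set ι) => b i) :=
    (b.orthonormal.comp _ Subtype.val_injective).linearIndependent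
  rw [Set.image_eq_range, finrank_span_eq_card li]
  simp

variable {T : E →ₗ[ℝ] E} {ev : ι → ℝ}

lemma mul_norm_sq_le_inner_map_self (hT : ∀ i, T (b i) = ev i • b i) {s : Set ι} {c : ℝ}
    (hc : ∀ i ∈ s, c ≤ ev i) {x : E} (hx : x ∈ Submodule.span ℝ (b '' s)) :
    c * ‖x‖ ^ 2 ≤ ⟪x, T x⟫ := by
  rw [b.inner_map_self_eq_sum hT, b.norm_sq_eq_sum_repr_sq, Finset.mul_sum]
  refine Finset.sum_le_sum fun i _ => ?_
  by_cases hi : i ∈ s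
  · exact mul_le_mul_of_nonneg_right (hc i hi) (sq_nonneg _)
  · simp [b.repr_eq_zero_of_mem_span_image hx hi]

lemma inner_map_self_le_mul_norm_sq (hT : ∀ i, T (b i) = ev i • b i) {s : Set ι} {c : ℝ}
    (hc : ∀ i ∈ s, ev i ≤ c) {x : E} (hx : x ∈ Submodule.span ℝ (b '' s)) :
    ⟪x, T x⟫ ≤ c * ‖x‖ ^ 2 := by
  have := b.mul_norm_sq_le_inner_map_self (T := -T) (ev := -ev) (fun i => by simp [hT])
    (c := -c) (fun i hi => neg_le_neg (hc i hi)) hx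
  simpa [inner_neg_right] using this

end OrthonormalBasis

namespace Matrix.IsHermitian

lemma toEuclideanLin_eigenvectorBasis {n : Type*} [Fintype n] [DecidableEq n]
    {A : Matrix n n ℝ} (hA : A.IsHermitian) (j : n) :
    toEuclideanLin A (hA.eigenvectorBasis j) = hA.eigenvalues j • hA.eigenvectorBasis j := by
  ext i
  simpa [toLpLin_apply] using congrFun (hA.mulVec_eigenvectorBasis j) i

section Sorted

variable {D : ℕ} {A : Matrix (Fin D) (Fin D) ℝ} (hA : A.IsHermitian)

def HasSortedEigenvalues (μ : Fin D → ℝ) : Prop :=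
  Antitone μ ∧ ∃ e : Equiv.Perm (Fin D), ∀ i, hA.eigenvalues (e i) = μ i

variable {hA} {μ : Fin D → ℝ}

lemma HasSortedEigenvalues.exists_subspace_le_inner (hμ : hA.HasSortedEigenvalues μ)
    (j : Fin D) : ∃ V : Submodule ℝ (EuclideanSpace ℝ (Fin D)),
      (j : ℕ) + 1 ≤ finrank ℝ V ∧ ∀ x ∈ V, μ j * ‖x‖ ^ 2 ≤ ⟪x, toEuclideanLin A x⟫ := by
  classical
  obtain ⟨hanti, e, he⟩ := hμ
  let s : Finset (Fin D) := {i | μ j ≤ hA.eigenvalues i}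
  refine ⟨Submodule.span ℝ (hA.eigenvectorBasis '' s), ?_, fun x hx =>
    hA.eigenvectorBasis.mul_norm_sq_le_inner_map_self hA.toEuclideanLin_eigenvectorBasis
      (fun i hi => (mem_filter.mp hi).2) hx⟩
  rw [OrthonormalBasis.finrank_span_image, ← Fin.card_Iic]
  exact card_le_card_of_injOn e (fun i hi => by simp [s, he, hanti (mem_Iic.mp hi)])
    e.injective.injOn

lemma HasSortedEigenvalues.exists_subspace_inner_le (hμ : hA.HasSortedEigenvalues μ)
    (j : Fin D) : ∃ V : Submodule ℝ (EuclideanSpace ℝ (Fin D)),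
      D - j ≤ finrank ℝ V ∧ ∀ x ∈ V, ⟪x, toEuclideanLin A x⟫ ≤ μ j * ‖x‖ ^ 2 := by
  classical
  obtain ⟨hanti, e, he⟩ := hμ
  let s : Finset (Fin D) := {i | hA.eigenvalues i ≤ μ j}
  refine ⟨Submodule.span ℝ (hA.eigenvectorBasis '' s), ?_, fun x hx =>
    hA.eigenvectorBasis.inner_map_self_le_mul_norm_sq hA.toEuclideanLin_eigenvectorBasis
      (fun i hi => (mem_filter.mp hi).2) hx⟩
  rw [OrthonormalBasis.finrank_span_image, ← Fin.card_Ici]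
  exact card_le_card_of_injOn e (fun i hi => by simp [s, he, hanti (mem_Ici.mp hi)])
    e.injective.injOn

end Sorted

theorem weyl_sub_smul {D : ℕ} {A B : Matrix (Fin D) (Fin D) ℝ} {hA : A.IsHermitian}
    {hB : B.IsHermitian} {γ : ℝ} (hγ : 0 ≤ γ) {hC : (A - γ • B).IsHermitian}
    {α β κ : Fin D → ℝ} (hα : hA.HasSortedEigenvalues α) (hβ : hB.HasSortedEigenvalues β)
    (hκ : hC.HasSortedEigenvalues κ) (i j : Fin D) (hij : (i : ℕ) + j < D) :
    α ⟨i + j, hij⟩ ≤ κ i + γ * β j := by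
  obtain ⟨VA, hVA, hA_ge⟩ := hα.exists_subspace_le_inner ⟨i + j, hij⟩
  obtain ⟨VB, hVB, hB_le⟩ := hβ.exists_subspace_inner_le j
  obtain ⟨VC, hVC, hC_le⟩ := hκ.exists_subspace_inner_le i
  obtain ⟨x, ⟨⟨hxA, hxB⟩, hxC⟩, hx0⟩ := Submodule.exists_mem_inf_inf_ne_zero_of_finrank_add_gt
    VA VB VC (by rw [finrank_euclideanSpace_fin]; dsimp only at hVA; omega)
  refine le_of_mul_le_mul_right ?_ (by positivity : 0 < ‖x‖ ^ 2)
  calc α ⟨i + j, hij⟩ * ‖x‖ ^ 2 ≤ ⟪x, toEuclideanLin A x⟫ := hA_ge x hxA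
    _ = ⟪x, toEuclideanLin (A - γ • B) x⟫ + γ * ⟪x, toEuclideanLin B x⟫ := by
      simp [inner_sub_right, real_inner_smul_right]
    _ ≤ κ i * ‖x‖ ^ 2 + γ * (β j * ‖x‖ ^ 2) :=
      add_le_add (hC_le x hxC) (mul_le_mul_of_nonneg_left (hB_le x hxB) hγ)
    _ = (κ i + γ * β j) * ‖x‖ ^ 2 := by ring

end Matrix.IsHermitian

/-- Theorem 2 (Weyl condition): if for some `k` with `d + k < D` (zero-based) one has
`γ < μ_{d+k} / ρ_k`, then the `d`-th largest eigenvalue (zero-based index `d`) of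
`C = C_X - γ C_Y` is positive.  Eigenvalues `μ, ρ, lam` are given in descending order. -/
theorem stmt2 {D : ℕ} (CX CY : Matrix (Fin D) (Fin D) ℝ)
    (hX : CX.PosSemidef) (hY : CY.PosSemidef)
    (γ : ℝ) (hγ : 0 ≤ γ)
    (hCH : (CX - γ • CY).IsHermitian)
    (μ ρ lam : Fin D → ℝ)
    (hμa : Antitone μ) (hρa : Antitone ρ) (hlama : Antitone lam)
    (hμe : ∃ e : Equiv.Perm (Fin D), ∀ i, hX.1.eigenvalues (e i) = μ i)
    (hρe : ∃ e : Equiv.Perm (Fin D), ∀ i, hY.1.eigenvalues (e i) = ρ i)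
    (hlame : ∃ e : Equiv.Perm (Fin D), ∀ i, hCH.eigenvalues (e i) = lam i)
    (d : Fin D)
    (hk : ∃ (k : Fin D) (h : (d : ℕ) + (k : ℕ) < D),
      γ < μ ⟨(d : ℕ) + (k : ℕ), h⟩ / ρ k) :
    0 < lam d := by
  obtain ⟨k, hdk, hγk⟩ := hk
  have hρk : 0 < ρ k := by
    obtain ⟨e, he⟩ := hρe
    refine (he k ▸ hY.eigenvalues_nonneg (e k)).lt_of_ne fun h => ?_
    rw [← h, div_zero] at hγk
    exact hγ.not_gt hγk
  have hweyl := Matrix.IsHermitian.weyl_sub_smul hγ ⟨hμa, hμe⟩ ⟨hρa, hρe⟩ ⟨hlama, hlame⟩ d k hdk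
  have := (lt_div_iff₀ hρk).mp hγk
  linarith
end

section
/- Let $C$ be a symmetric positive definite $D \times D$ matrix with descending eigenvalues $\lambda_1 \geq \cdots \geq \lambda_D > 0$, and fix $c > 0$ and $1 \leq d < D$. Among matrices $A = WW^\top + \sigma^2 I_D$ with $W \in \mathbb{R}^{D\times d}$ and $\sigma^2 > 0$, the function $f(W, \sigma^2) = \frac{c}{2}\log|A| + \frac{1}{2}\operatorname{tr}(A^{-1} C)$ is minimized at $\sigma^{*2} = \frac{1}{c(D-d)}\sum_{i=d+1}^D \lambda_i$ and $W^* = U_d (\Lambda_d/c - \sigma^{*2} I_d)^{1/2} R$, where $U_d$ holds the top $d$ eigenvectors of $C$, $\Lambda_d = \operatorname{diag}(\lambda_1,\dots,\lambda_d)$, and $R$ is any $d \times d$ orthogonal matrix, provided $\lambda_d / c > \sigma^{*2}$. -/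
/-!
Diagonalise `W Wᵀ = Pᵀ diag(μ) P` with `μ` decreasing; since `W Wᵀ` has rank at most `d`,
`A = W Wᵀ + σ² I` has eigenvalues `a = μ + σ²` with `aᵢ = σ²` for `i ≥ d`. Writing
`C = Uᵀ diag(λ) U`, the objective becomes `∑ᵢ φ(aᵢ, (S λ)ᵢ)` with
`φ(x, t) = (c/2) log x + t / (2x)` and `S = ((P Uᵀ)ᵢⱼ²)` doubly stochastic. By Birkhoff's theorem
and the rearrangement inequality (`1/a` increasing, `λ` decreasing) this is at least
`∑ᵢ φ(aᵢ, λᵢ)`. As `φ(·, t)` is minimised at `t / c`, each of the first `d` terms is at least its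
value at `λᵢ / c`; the last `D - d` terms share the variance `σ²`, so their sum is a single `φ`,
minimised at `σ*²`. These minimisers are exactly the eigenvalues of `W* W*ᵀ + σ*² I`.
-/

open Matrix Finset

noncomputable def scalarObjective (c x t : ℝ) : ℝ := c / 2 * Real.log x + t / (2 * x)

noncomputable def pcpcaObjective {n : Type*} [Fintype n] [DecidableEq n] (c : ℝ)
    (C A : Matrix n n ℝ) : ℝ :=
  c / 2 * Real.log A.det + 1 / 2 * (A⁻¹ * C).trace

lemma scalarObjective_le {c t x : ℝ} (hc : 0 < c) (ht : 0 < t) (hx : 0 < x) :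
    scalarObjective c (t / c) t ≤ scalarObjective c x t := by
  have hlog := Real.log_le_sub_one_of_pos (show 0 < t / (c * x) by positivity)
  rw [Real.log_div ht.ne' (by positivity), Real.log_mul hc.ne' hx.ne'] at hlog
  unfold scalarObjective
  rw [Real.log_div ht.ne' hc.ne']
  have hmin : t / (2 * (t / c)) = c / 2 := by field_simp
  have hscale : c / 2 * (t / (c * x)) = t / (2 * x) := by field_simp
  nlinarith

lemma sum_scalarObjective {ι : Type*} (s : Finset ι) (c x : ℝ) (t : ι → ℝ) :
    ∑ i ∈ s, scalarObjective c x (t i) = scalarObjective (c * #s) x (∑ i ∈ s, t i) := by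
  simp only [scalarObjective, sum_add_distrib, sum_const, nsmul_eq_mul, ← sum_div]
  ring

lemma sum_scalarObjective_minimizer_le {ι : Type*} [Fintype ι] [DecidableEq ι] {c : ℝ}
    (hc : 0 < c) {l : ι → ℝ} (hl : ∀ i, 0 < l i) {T : Finset ι} (hT : T.Nonempty)
    {α a : ι → ℝ} {s : ℝ}
    (hα : ∀ i ∉ T, α i = l i / c) (hαT : ∀ i ∈ T, α i = (∑ j ∈ T, l j) / (c * #T))
    (ha : ∀ i, 0 < a i) (haT : ∀ i ∈ T, a i = s) :
    ∑ i, scalarObjective c (α i) (l i) ≤ ∑ i, scalarObjective c (a i) (l i) := by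
  rw [← sum_compl_add_sum T, ← sum_compl_add_sum T]
  refine add_le_add (sum_le_sum fun i hi => ?_) ?_
  · rw [hα i (mem_compl.mp hi)]
    exact scalarObjective_le hc (hl i) (ha i)
  · obtain ⟨i, hi⟩ := hT
    rw [sum_congr rfl fun i hi => congr_arg₂ _ (hαT i hi) rfl,
      sum_congr rfl fun i hi => congr_arg₂ (scalarObjective c) (haT i hi) rfl,
      sum_scalarObjective, sum_scalarObjective]
    exact scalarObjective_le (mul_pos hc (by exact_mod_cast card_pos.mpr ⟨i, hi⟩))
      (sum_pos (fun i _ => hl i) ⟨i, hi⟩) (haT i hi ▸ ha i)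

theorem Antivary.dotProduct_le_mulVec_dotProduct {R n : Type*} [Field R] [LinearOrder R]
    [IsStrictOrderedRing R] [Fintype n] [DecidableEq n] {f g : n → R} (hfg : Antivary f g)
    {S : Matrix n n R} (hS : S ∈ doublyStochastic R n) : f ⬝ᵥ g ≤ (S *ᵥ f) ⬝ᵥ g := by
  obtain ⟨w, hw0, hw1, rfl⟩ := exists_eq_sum_perm_of_mem_doublyStochastic hS
  calc f ⬝ᵥ g = ∑ σ, w σ * (f ⬝ᵥ g) := by rw [← sum_mul, hw1, one_mul]
    _ ≤ ∑ σ, w σ * ((f ∘ σ) ⬝ᵥ g) :=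
      sum_le_sum fun σ _ => mul_le_mul_of_nonneg_left hfg.sum_mul_le_sum_comp_perm_mul (hw0 σ)
    _ = _ := by simp [Matrix.sum_mulVec, smul_mulVec, permMatrix_mulVec, sum_dotProduct]

lemma sum_scalarObjective_le_mulVec {ι : Type*} [Fintype ι] [DecidableEq ι] [LinearOrder ι]
    {a l : ι → ℝ} (ha : Antitone a) (ha0 : ∀ i, 0 < a i) (hl : Antitone l)
    {S : Matrix ι ι ℝ} (hS : S ∈ doublyStochastic ℝ ι) (c : ℝ) :
    ∑ i, scalarObjective c (a i) (l i) ≤ ∑ i, scalarObjective c (a i) ((S *ᵥ l) i) := by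
  have hg : Monotone fun i => (2 * a i)⁻¹ := fun i j hij =>
    inv_anti₀ (by linarith [ha0 j]) (by linarith [ha hij])
  have := (hl.antivary hg).dotProduct_le_mulVec_dotProduct hS
  simp only [dotProduct] at this
  simp only [scalarObjective, sum_add_distrib, div_eq_mul_inv]
  linarith

section Orthogonal

variable {n : Type*} [Fintype n] [DecidableEq n]

lemma map_sq_mem_doublyStochastic {G : Matrix n n ℝ} (hG : G * Gᵀ = 1) :
    G.map (· ^ 2) ∈ doublyStochastic ℝ n := by
  have hG' : Gᵀ * G = 1 := mul_eq_one_comm.mp hG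
  refine mem_doublyStochastic_iff_sum.mpr ⟨fun i j => sq_nonneg _, fun i => ?_, fun j => ?_⟩
  · simpa [mul_apply, sq] using congr_fun (congr_fun hG i) i
  · simpa [mul_apply, sq] using congr_fun (congr_fun hG' j) j

lemma of_mul_transpose_of_eq_ite {v : n → n → ℝ}
    (hv : ∀ i j, v i ⬝ᵥ v j = if i = j then (1 : ℝ) else 0) : of v * (of v)ᵀ = 1 := by
  ext i j
  simpa [mul_apply, one_apply, dotProduct] using hv i j

lemma eq_transpose_mul_diagonal_mul_of_mulVec_eq {M : Matrix n n ℝ} {v : n → n → ℝ}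
    {μ : n → ℝ} (hv : ∀ i j, v i ⬝ᵥ v j = if i = j then (1 : ℝ) else 0)
    (hM : ∀ i, M *ᵥ v i = μ i • v i) :
    M = (of v)ᵀ * diagonal μ * of v := by
  have hMv : M * (of v)ᵀ = (of v)ᵀ * diagonal μ := by
    ext i j
    rw [mul_diagonal]
    simpa [mul_apply, mulVec, dotProduct, mul_comm] using congr_fun (hM j) i
  rw [← hMv, Matrix.mul_assoc, mul_eq_one_comm.mp (of_mul_transpose_of_eq_ite hv), mul_one]

lemma transpose_mul_diagonal_mul_add_smul_one {P : Matrix n n ℝ} (hP : P * Pᵀ = 1)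
    (μ : n → ℝ) (s : ℝ) :
    Pᵀ * diagonal μ * P + s • 1 = Pᵀ * diagonal (fun i => μ i + s) * P := by
  rw [← diagonal_add, Matrix.mul_add, Matrix.add_mul, ← smul_one_eq_diagonal, mul_smul_comm,
    mul_one, smul_mul_assoc, mul_eq_one_comm.mp hP]

lemma det_transpose_mul_diagonal_mul {P : Matrix n n ℝ} (hP : P * Pᵀ = 1) (a : n → ℝ) :
    (Pᵀ * diagonal a * P).det = ∏ i, a i := by
  have h := congr_arg det hP
  rw [det_mul, det_transpose, det_one] at h
  rw [det_mul, det_mul, det_transpose, det_diagonal]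
  linear_combination (∏ i, a i) * h

lemma inv_transpose_mul_diagonal_mul {P : Matrix n n ℝ} (hP : P * Pᵀ = 1) {a : n → ℝ}
    (ha : ∀ i, a i ≠ 0) : (Pᵀ * diagonal a * P)⁻¹ = Pᵀ * diagonal a⁻¹ * P := by
  refine inv_eq_right_inv ?_
  calc Pᵀ * diagonal a * P * (Pᵀ * diagonal a⁻¹ * P)
      = Pᵀ * (diagonal a * (P * Pᵀ) * diagonal a⁻¹) * P := by simp only [Matrix.mul_assoc]
    _ = 1 := by
      simp only [hP, mul_one, diagonal_mul_diagonal, Pi.inv_apply, mul_inv_cancel₀ (ha _),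
        diagonal_one, mul_eq_one_comm.mp hP]

lemma trace_diagonal_mul_mul_diagonal_mul_transpose (x y : n → ℝ) (G : Matrix n n ℝ) :
    (diagonal x * G * diagonal y * Gᵀ).trace = ∑ i, x i * (G.map (· ^ 2) *ᵥ y) i := by
  simp only [trace, Matrix.diag, mul_apply, diagonal_apply, ite_mul, zero_mul, sum_ite_eq,
    mem_univ, if_true, mul_ite, mul_zero, sum_ite_eq', mulVec, dotProduct, map_apply,
    transpose_apply, mul_sum]
  exact sum_congr rfl fun i _ => sum_congr rfl fun j _ => by ring

lemma pcpcaObjective_conj {P : Matrix n n ℝ} (hP : P * Pᵀ = 1) {a : n → ℝ}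
    (ha : ∀ i, 0 < a i) (Q : Matrix n n ℝ) (l : n → ℝ) (c : ℝ) :
    pcpcaObjective c (Qᵀ * diagonal l * Q) (Pᵀ * diagonal a * P)
      = ∑ i, scalarObjective c (a i) (((P * Qᵀ).map (· ^ 2) *ᵥ l) i) := by
  have htrace : (Pᵀ * diagonal a⁻¹ * P * (Qᵀ * diagonal l * Q)).trace
      = (diagonal a⁻¹ * (P * Qᵀ) * diagonal l * (P * Qᵀ)ᵀ).trace := by
    rw [transpose_mul, transpose_transpose, Matrix.mul_assoc, Matrix.mul_assoc,
      trace_mul_comm Pᵀ]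
    simp only [Matrix.mul_assoc]
  rw [pcpcaObjective, det_transpose_mul_diagonal_mul hP, inv_transpose_mul_diagonal_mul hP
    fun i => (ha i).ne', htrace, trace_diagonal_mul_mul_diagonal_mul_transpose,
    Real.log_prod fun i _ => (ha i).ne', mul_sum, mul_sum, ← sum_add_distrib]
  refine sum_congr rfl fun i _ => ?_
  simp only [scalarObjective, Pi.inv_apply]
  field_simp

end Orthogonal

lemma submatrix_mul_diagonal_mul_transpose {k m n : Type*} [Fintype m] [Fintype n]
    [DecidableEq m] [DecidableEq n] {e : m → n} (he : Function.Injective e) (U : Matrix k n ℝ)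
    (s : m → ℝ) :
    U.submatrix id e * diagonal s * (U.submatrix id e)ᵀ
      = U * diagonal (Function.extend e s 0) * Uᵀ := by
  ext i j
  rw [mul_apply, mul_apply]
  simp only [mul_diagonal, submatrix_apply, id, transpose_apply]
  refine Fintype.sum_of_injective e he _ _ (fun l hl => ?_) fun l => by rw [he.extend_apply]
  rw [Function.extend_apply' _ _ _ (by simpa using hl), Pi.zero_apply, mul_zero, zero_mul]

lemma mul_mul_transpose_of_mul_transpose_eq_one {k m : Type*} [Fintype m] [DecidableEq m]
    {X : Matrix k m ℝ} {R : Matrix m m ℝ} (hR : R * Rᵀ = 1) : X * R * (X * R)ᵀ = X * Xᵀ := by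
  rw [transpose_mul, Matrix.mul_assoc, ← Matrix.mul_assoc R, hR, Matrix.one_mul]

lemma Matrix.IsHermitian.exists_equiv_antitone_eigenvalues {n : Type*} [Fintype n]
    [DecidableEq n] {A : Matrix n n ℝ} (hA : A.IsHermitian) :
    ∃ e : Fin (Fintype.card n) ≃ n, Antitone (hA.eigenvalues ∘ e) :=
  ⟨Fintype.equivOfCardEq (Fintype.card_fin _), by
    simpa [Function.comp_def, IsHermitian.eigenvalues] using hA.eigenvalues₀_antitone⟩

lemma Antitone.eq_zero_of_card_ne_zero_le {D d : ℕ} {f : Fin D → ℝ} (hf : Antitone f)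
    (hf0 : ∀ i, 0 ≤ f i) (hcard : Fintype.card {i // f i ≠ 0} ≤ d) {j : Fin D}
    (hj : d ≤ j) : f j = 0 := by
  by_contra hne
  have hsub : Iic j ⊆ univ.filter (f · ≠ 0) := fun i hi => by
    simp only [mem_filter, mem_univ, true_and]
    exact (lt_of_lt_of_le ((hf0 j).lt_of_ne' hne) (hf (mem_Iic.mp hi))).ne'
  have := card_le_card hsub
  rw [Fin.card_Iic, ← Fintype.card_subtype] at this
  omega

lemma exists_antitone_eigendecomposition_mul_transpose {D : ℕ} {m : Type*} [Fintype m]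
    (W : Matrix (Fin D) m ℝ) :
    ∃ (μ : Fin D → ℝ) (P : Matrix (Fin D) (Fin D) ℝ), Antitone μ ∧ (∀ i, 0 ≤ μ i) ∧
      (∀ i : Fin D, Fintype.card m ≤ i → μ i = 0) ∧ P * Pᵀ = 1 ∧
      W * Wᵀ = Pᵀ * diagonal μ * P := by
  have hpsd : (W * Wᵀ).PosSemidef := by
    simpa using posSemidef_self_mul_conjTranspose W
  obtain ⟨e, he⟩ := hpsd.1.exists_equiv_antitone_eigenvalues
  set τ : Fin D ≃ Fin D := (finCongr (Fintype.card_fin D).symm).trans e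
  set p : Fin D → Fin D → ℝ := fun j => ⇑(hpsd.1.eigenvectorBasis (τ j))
  have hp : ∀ i j, p i ⬝ᵥ p j = if i = j then (1 : ℝ) else 0 := by
    intro i j
    have := orthonormal_iff_ite.mp (hpsd.1.eigenvectorBasis).orthonormal (τ i) (τ j)
    simpa [EuclideanSpace.inner_eq_star_dotProduct, dotProduct_comm, p] using this
  have hrank : Fintype.card {i // hpsd.1.eigenvalues (τ i) ≠ 0} ≤ Fintype.card m := by
    calc _ = Fintype.card {i // hpsd.1.eigenvalues i ≠ 0} :=
          Fintype.card_congr (τ.subtypeEquiv fun _ => Iff.rfl)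
      _ = (W * Wᵀ).rank := hpsd.1.rank_eq_card_non_zero_eigs.symm
      _ ≤ Fintype.card m := (rank_mul_le_left W Wᵀ).trans (rank_le_card_width W)
  have hanti : Antitone (hpsd.1.eigenvalues ∘ τ) := fun i j hij => he (by simpa using hij)
  exact ⟨_, of p, hanti, fun i => hpsd.eigenvalues_nonneg _,
    fun i hi => hanti.eq_zero_of_card_ne_zero_le (fun i => hpsd.eigenvalues_nonneg _) hrank hi,
    of_mul_transpose_of_eq_ite hp,
    eq_transpose_mul_diagonal_mul_of_mulVec_eq hp fun j => hpsd.1.mulVec_eigenvectorBasis _⟩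

lemma submatrix_mul_diagonal_sqrt_mul_add_smul_one {m n : Type*} [Fintype m] [Fintype n]
    [DecidableEq m] [DecidableEq n] {U : Matrix n n ℝ} (hU : U * Uᵀ = 1) {e : m → n}
    (he : Function.Injective e) {x : m → ℝ} (hx : ∀ j, 0 ≤ x j) {R : Matrix m m ℝ}
    (hR : R * Rᵀ = 1) (σ : ℝ) :
    Uᵀ.submatrix id e * diagonal (fun j => √(x j)) * R
        * (Uᵀ.submatrix id e * diagonal (fun j => √(x j)) * R)ᵀ + σ • 1
      = Uᵀ * diagonal (fun i => Function.extend e x 0 i + σ) * U := by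
  have hsq : (fun j => √(x j) * √(x j)) = x := funext fun j => Real.mul_self_sqrt (hx j)
  rw [mul_mul_transpose_of_mul_transpose_eq_one hR, transpose_mul, diagonal_transpose,
    Matrix.mul_assoc, ← Matrix.mul_assoc (diagonal _), diagonal_mul_diagonal, hsq,
    ← Matrix.mul_assoc, submatrix_mul_diagonal_mul_transpose he, transpose_transpose,
    transpose_mul_diagonal_mul_add_smul_one hU]

lemma optimal_covariance_eq {D d : ℕ} (h : d ≤ D) {U : Matrix (Fin D) (Fin D) ℝ}
    (hU : U * Uᵀ = 1) {R : Matrix (Fin d) (Fin d) ℝ} (hR : R * Rᵀ = 1) {x : Fin D → ℝ} {σ : ℝ}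
    (hx : ∀ i : Fin D, (i : ℕ) < d → σ ≤ x i) {W : Matrix (Fin D) (Fin d) ℝ}
    (hW : W = (of fun i j => U (Fin.castLE h j) i)
      * diagonal (fun j => √(x (Fin.castLE h j) - σ)) * R) :
    W * Wᵀ + σ • 1 = Uᵀ * diagonal (fun i : Fin D => if (i : ℕ) < d then x i else σ) * U := by
  have hdiag : (fun i => Function.extend (Fin.castLE h) (fun j => x (Fin.castLE h j) - σ) 0 i
      + σ) = fun i : Fin D => if (i : ℕ) < d then x i else σ := by
    funext i
    by_cases hi : (i : ℕ) < d
    · rw [show i = Fin.castLE h ⟨i, hi⟩ from rfl, (Fin.castLE_injective h).extend_apply]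
      simp [hi]
    · rw [Function.extend_apply' _ _ _ fun ⟨j, hj⟩ => hi (hj ▸ by simp)]
      simp [hi]
  rw [hW, ← hdiag]
  exact submatrix_mul_diagonal_sqrt_mul_add_smul_one hU (Fin.castLE_injective h)
    (fun j => sub_nonneg.mpr (hx _ (by simp))) hR σ

lemma exists_sum_scalarObjective_le_pcpcaObjective {D : ℕ} {m : Type*} [Fintype m]
    (W : Matrix (Fin D) m ℝ) {σ : ℝ} (hσ : 0 < σ) {U : Matrix (Fin D) (Fin D) ℝ}
    (hU : U * Uᵀ = 1) {l : Fin D → ℝ} (hl : Antitone l) (c : ℝ) :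
    ∃ a : Fin D → ℝ, (∀ i, 0 < a i) ∧ (∀ i : Fin D, Fintype.card m ≤ i → a i = σ) ∧
      ∑ i, scalarObjective c (a i) (l i)
        ≤ pcpcaObjective c (Uᵀ * diagonal l * U) (W * Wᵀ + σ • 1) := by
  obtain ⟨μ, P, hμ, hμ0, hμm, hP, hWW⟩ := exists_antitone_eigendecomposition_mul_transpose W
  have hS : (P * Uᵀ).map (· ^ 2) ∈ doublyStochastic ℝ (Fin D) :=
    map_sq_mem_doublyStochastic <| (mul_mul_transpose_of_mul_transpose_eq_one <| by
      rw [transpose_transpose]; exact mul_eq_one_comm.mp hU).trans hP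
  refine ⟨fun i => μ i + σ, fun i => by linarith [hμ0 i], fun i hi => by simp [hμm i hi], ?_⟩
  rw [hWW, transpose_mul_diagonal_mul_add_smul_one hP, pcpcaObjective_conj hP fun i => by
    linarith [hμ0 i]]
  exact sum_scalarObjective_le_mulVec (fun i j hij => by linarith [hμ hij])
    (fun i => by linarith [hμ0 i]) hl hS c

/-- The PCPCA maximum relative likelihood solution: `f(W,σ²) = (c/2) log|A| + (1/2) tr(A⁻¹C)`
with `A = WWᵀ + σ²I` is minimized at `σ*² = (∑_{i>d} λᵢ)/(c(D-d))` and
`W* = U_d (Λ_d/c - σ*² I)^{1/2} R`, provided `λ_d / c > σ*²`.  Here `u` is an orthonormal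
eigenbasis of the positive definite matrix `C` with descending eigenvalues `lam`. -/
theorem stmt9 {D d : ℕ} (hdD : d < D)
    (C : Matrix (Fin D) (Fin D) ℝ)
    (lam : Fin D → ℝ) (hmono : Antitone lam) (hpos : ∀ i, 0 < lam i)
    (u : Fin D → Fin D → ℝ)
    (horth : ∀ i j, u i ⬝ᵥ u j = if i = j then (1 : ℝ) else 0)
    (heig : ∀ i, C.mulVec (u i) = lam i • u i)
    (c : ℝ) (hc : 0 < c)
    (σstar2 : ℝ)
    (hσ : σstar2 = (∑ i ∈ Finset.univ.filter fun i : Fin D => d ≤ (i : ℕ), lam i)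
      / (c * ((D : ℝ) - d)))
    (hgap : σstar2 < lam ⟨d - 1, by omega⟩ / c)
    (R : Matrix (Fin d) (Fin d) ℝ) (hR : R * Rᵀ = 1)
    (Wstar : Matrix (Fin D) (Fin d) ℝ)
    (hW : Wstar = (Matrix.of fun (i : Fin D) (j : Fin d) => u (Fin.castLE hdD.le j) i)
      * Matrix.diagonal (fun j : Fin d => Real.sqrt (lam (Fin.castLE hdD.le j) / c - σstar2))
      * R) :
    ∀ (W : Matrix (Fin D) (Fin d) ℝ) (σ2 : ℝ), 0 < σ2 →
      c / 2 * Real.log (Wstar * Wstarᵀ + σstar2 • (1 : Matrix (Fin D) (Fin D) ℝ)).det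
          + 1 / 2 * ((Wstar * Wstarᵀ + σstar2 • (1 : Matrix (Fin D) (Fin D) ℝ))⁻¹ * C).trace
        ≤ c / 2 * Real.log (W * Wᵀ + σ2 • (1 : Matrix (Fin D) (Fin D) ℝ)).det
          + 1 / 2 * ((W * Wᵀ + σ2 • (1 : Matrix (Fin D) (Fin D) ℝ))⁻¹ * C).trace := by
  intro W σ2 hσ2
  set T := univ.filter fun i : Fin D => d ≤ (i : ℕ)
  have hT : T.Nonempty := ⟨⟨d, hdD⟩, by simp [T]⟩
  have hcard : (#T : ℝ) = D - d := by
    rw [show T = Ici ⟨d, hdD⟩ by ext i; simp [T, Fin.le_def], Fin.card_Ici, Nat.cast_sub hdD.le]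
  have hσpos : 0 < σstar2 := by
    rw [hσ, ← hcard]
    exact div_pos (sum_pos (fun i _ => hpos i) hT) (mul_pos hc (by exact_mod_cast hT.card_pos))
  have hhead : ∀ i : Fin D, (i : ℕ) < d → σstar2 ≤ lam i / c := fun i hi =>
    hgap.le.trans <| div_le_div_of_nonneg_right (hmono <| Fin.mk_le_mk.mpr <| by omega) hc.le
  set α : Fin D → ℝ := fun i => if (i : ℕ) < d then lam i / c else σstar2
  have hα : ∀ i, 0 < α i := fun i => by
    by_cases hi : (i : ℕ) < d <;> simp only [α, hi, if_true, if_false]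
    exacts [div_pos (hpos i) hc, hσpos]
  have hU : of u * (of u)ᵀ = 1 := of_mul_transpose_of_eq_ite horth
  have hAstar : Wstar * Wstarᵀ + σstar2 • 1 = (of u)ᵀ * diagonal α * of u :=
    optimal_covariance_eq hdD.le hU hR hhead hW
  obtain ⟨a, ha, haT, hle⟩ := exists_sum_scalarObjective_le_pcpcaObjective W hσ2 hU hmono c
  show pcpcaObjective c C _ ≤ pcpcaObjective c C _
  rw [hAstar, eq_transpose_mul_diagonal_mul_of_mulVec_eq horth heig, pcpcaObjective_conj hU hα,
    hU, Matrix.map_one _ (by norm_num) (by norm_num), one_mulVec]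
  refine le_trans ?_ hle
  exact sum_scalarObjective_minimizer_le hc hpos hT (fun i hi => if_pos (by simpa [T] using hi))
    (fun i hi => by rw [hcard, ← hσ]; exact if_neg (by simpa [T] using hi)) ha
    fun i hi => haT i (by simpa [T] using hi)
end

section
/- With $P = \beta N(0, C_F) + (1-\beta) N(0, C_B)$ (foreground/background indicated by $\alpha$), the CPCA loss $l_\theta(u) = (-\gamma)^\alpha x^\top \Delta' x$, and $\Delta = V^* V^{*\top} - V V^\top$, the variance $v(\theta, \theta^*) = \mathbb{E}_P[(l_\theta - l_{\theta^*})^2] - m(\theta,\theta^*)^2$ satisfies $v(\theta,\theta^*) = (\beta - \beta^2)\operatorname{tr}(\Delta C_F)^2 + \gamma^2(\beta-\beta^2)\operatorname{tr}(\Delta C_B)^2 + 2\beta\operatorname{tr}(\Delta C_F \Delta C_F) + 2\gamma^2(1-\beta)\operatorname{tr}(\Delta C_B \Delta C_B) - 2\gamma\beta(1-\beta)\operatorname{tr}(\Delta C_F)\operatorname{tr}(\Delta C_B)$, where $m(\theta,\theta^*) = \beta\operatorname{tr}(\Delta C_F) + (1-\beta)\gamma\operatorname{tr}(\Delta C_B)$.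 -/
/-!
Write the symmetric matrix `Δ` as `A * diagonal s * Aᵀ` (spectral theorem), so that
`xᵀΔx = ∑ₖ sₖ (aₖ ⬝ᵥ x)²` with `aₖ` the columns of `A`. Then `E[(xᵀΔx)²]` is a combination of the
mixed moments `E[(a ⬝ᵥ x)² (b ⬝ᵥ x)²]`, which polarization turns into fourth moments of the
one-dimensional centred Gaussians `c ⬝ᵥ x`. With `E[y⁴] = 3σ⁴` (the fourth derivative at `0` of the
mgf `exp (σ² t² / 2)`) this gives `(aᵀCa)(bᵀCb) + 2(aᵀCb)²`, hence
`E[(xᵀΔx)²] = tr(ΔC)² + 2 tr(ΔCΔC)`; the variance of the mixture is then an algebraic identity.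
-/

open Matrix MeasureTheory ProbabilityTheory
open scoped NNReal

lemma integrable_pow_four_gaussianReal (v : ℝ≥0) :
    Integrable (fun x : ℝ => x ^ 4) (gaussianReal 0 v) := by
  simpa [Even.pow_abs (by decide : Even 4)] using
    (memLp_id_gaussianReal (μ := 0) (v := v) 4).integrable_norm_pow'

lemma integral_pow_four_gaussianReal (v : ℝ≥0) :
    ∫ x, x ^ 4 ∂gaussianReal 0 v = 3 * (v : ℝ) ^ 2 := by
  have hmgf := iteratedDeriv_mgf_zero (X := fun x => x) (μ := gaussianReal 0 v) (by simp) 4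
  rw [mgf_fun_id_gaussianReal] at hmgf
  simp only [zero_mul, zero_add, Pi.pow_apply] at hmgf
  rw [← hmgf]
  set E : ℝ → ℝ := fun t => Real.exp (v * t ^ 2 / 2) with hE
  have hE' : ∀ t, HasDerivAt E (v * t * E t) t := fun t =>
    (((hasDerivAt_pow 2 t).const_mul (v : ℝ)).div_const 2).exp.congr_deriv (by simp [hE]; ring)
  have deriv_cubic_mul : ∀ a b c d : ℝ,
      deriv (fun t => (a + b * t + c * t ^ 2 + d * t ^ 3) * E t)
        = fun t => (b + 2 * c * t + 3 * d * t ^ 2 + v * t * (a + b * t + c * t ^ 2 + d * t ^ 3))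
          * E t := by
    intro a b c d
    ext t
    have hp : HasDerivAt (fun t => a + b * t + c * t ^ 2 + d * t ^ 3)
        (b + 2 * c * t + 3 * d * t ^ 2) t :=
      ((((hasDerivAt_id' t).const_mul b).const_add a).fun_add
        ((hasDerivAt_pow 2 t).const_mul c)).fun_add ((hasDerivAt_pow 3 t).const_mul d)
        |>.congr_deriv (by norm_num; ring)
    rw [(hp.fun_mul (hE' t)).deriv]
    ring
  calc iteratedDeriv 4 E 0
      = iteratedDeriv 3 (fun t => (0 + v * t + 0 * t ^ 2 + 0 * t ^ 3) * E t) 0 := by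
        rw [iteratedDeriv_succ']; congr; ext t; rw [(hE' t).deriv]; ring
    _ = iteratedDeriv 2 (fun t => (v + 0 * t + v ^ 2 * t ^ 2 + 0 * t ^ 3) * E t) 0 := by
        rw [iteratedDeriv_succ', deriv_cubic_mul]; congr; ext t; ring
    _ = iteratedDeriv 1 (fun t => (0 + 3 * v ^ 2 * t + 0 * t ^ 2 + v ^ 3 * t ^ 3) * E t) 0 := by
        rw [iteratedDeriv_succ', deriv_cubic_mul]; congr; ext t; ring
    _ = 3 * v ^ 2 := by
        rw [iteratedDeriv_one, deriv_cubic_mul]; simp [hE]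

namespace Matrix

variable {ι κ : Type*} [Fintype ι]

lemma PosSemidef.dotProduct_mulVec_comm {C : Matrix ι ι ℝ} (hC : C.PosSemidef) (a b : ι → ℝ) :
    a ⬝ᵥ C *ᵥ b = b ⬝ᵥ C *ᵥ a := by
  rw [dotProduct_mulVec, dotProduct_comm, ← mulVec_transpose,
    (isHermitian_iff_isSymm.mp hC.isHermitian).eq]

lemma transpose_mul_mul_apply (A : Matrix ι κ ℝ) (C : Matrix ι ι ℝ) (k l : κ) :
    (Aᵀ * C * A) k l = Aᵀ k ⬝ᵥ C *ᵥ Aᵀ l := by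
  rw [dotProduct_mulVec]; rfl

variable [Fintype κ] [DecidableEq κ]

lemma dotProduct_mul_diagonal_mul_transpose_mulVec (A : Matrix ι κ ℝ) (s : κ → ℝ)
    (x : ι → ℝ) : x ⬝ᵥ (A * diagonal s * Aᵀ) *ᵥ x = ∑ k, s k * (Aᵀ k ⬝ᵥ x) ^ 2 := by
  rw [← mulVec_mulVec, ← mulVec_mulVec, dotProduct_mulVec, ← mulVec_transpose, dotProduct_comm]
  simp only [dotProduct, mulVec_diagonal]
  refine Finset.sum_congr rfl fun k _ => ?_
  rw [mulVec, dotProduct]; ring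

lemma trace_mul_diagonal_mul_transpose_mul (A : Matrix ι κ ℝ) (s : κ → ℝ) (X : Matrix ι ι ℝ) :
    (A * diagonal s * Aᵀ * X).trace = ∑ k, s k * (Aᵀ * X * A) k k := by
  rw [Matrix.mul_assoc, Matrix.mul_assoc, trace_mul_comm]
  simp [trace, diagonal_mul, Matrix.mul_assoc]

lemma trace_mul_diagonal_mul_transpose_mul_sq (A : Matrix ι κ ℝ) (s : κ → ℝ)
    (X : Matrix ι ι ℝ) :
    (A * diagonal s * Aᵀ * X * (A * diagonal s * Aᵀ * X)).trace
      = ∑ k, ∑ l, s k * s l * ((Aᵀ * X * A) k l * (Aᵀ * X * A) l k) := by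
  rw [show A * diagonal s * Aᵀ * X * (A * diagonal s * Aᵀ * X)
      = A * diagonal s * Aᵀ * (X * (A * diagonal s * Aᵀ) * X) by simp only [Matrix.mul_assoc],
    trace_mul_diagonal_mul_transpose_mul]
  refine Finset.sum_congr rfl fun k _ => ?_
  rw [show Aᵀ * (X * (A * diagonal s * Aᵀ) * X) * A = Aᵀ * X * A * diagonal s * (Aᵀ * X * A) by
    simp only [Matrix.mul_assoc], mul_apply, Finset.mul_sum]
  exact Finset.sum_congr rfl fun l _ => by rw [mul_diagonal]; ring

lemma IsSymm.exists_eq_mul_diagonal_mul_transpose [DecidableEq ι] {Δ : Matrix ι ι ℝ}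
    (hΔ : Δ.IsSymm) : ∃ (A : Matrix ι ι ℝ) (s : ι → ℝ), Δ = A * diagonal s * Aᵀ := by
  have hH : Δ.IsHermitian := isHermitian_iff_isSymm.mpr hΔ
  refine ⟨hH.eigenvectorUnitary, hH.eigenvalues, ?_⟩
  conv_lhs => rw [hH.spectral_theorem]
  simp [Unitary.conjStarAlgAut_apply, star_eq_conjTranspose]

end Matrix

variable {ι : Type*} [Fintype ι]

lemma sq_dotProduct_mul_sq_eq (a b x : ι → ℝ) :
    (a ⬝ᵥ x) ^ 2 * (b ⬝ᵥ x) ^ 2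
      = (((a + b) ⬝ᵥ x) ^ 4 + ((a - b) ⬝ᵥ x) ^ 4 - 2 * (a ⬝ᵥ x) ^ 4 - 2 * (b ⬝ᵥ x) ^ 4) / 12 := by
  rw [add_dotProduct, sub_dotProduct]
  ring

def IsCenteredGaussianWithCov (μ : Measure (ι → ℝ)) (C : Matrix ι ι ℝ) : Prop :=
  ∀ v : ι → ℝ, μ.map (fun x => v ⬝ᵥ x) = gaussianReal 0 (v ⬝ᵥ C *ᵥ v).toNNReal

namespace IsCenteredGaussianWithCov

variable {μ : Measure (ι → ℝ)} {C : Matrix ι ι ℝ}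

lemma integrable_dotProduct_pow_four (hμ : IsCenteredGaussianWithCov μ C) (a : ι → ℝ) :
    Integrable (fun x => (a ⬝ᵥ x) ^ 4) μ := by
  have h := integrable_pow_four_gaussianReal (a ⬝ᵥ C *ᵥ a).toNNReal
  rw [← hμ a] at h
  exact (integrable_map_measure h.aestronglyMeasurable (by fun_prop)).mp h

lemma integral_dotProduct_pow_four (hμ : IsCenteredGaussianWithCov μ C) (hC : C.PosSemidef)
    (a : ι → ℝ) : ∫ x, (a ⬝ᵥ x) ^ 4 ∂μ = 3 * (a ⬝ᵥ C *ᵥ a) ^ 2 := by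
  rw [← integral_map (f := fun y : ℝ => y ^ 4) (by fun_prop) (by fun_prop), hμ a,
    integral_pow_four_gaussianReal,
    Real.coe_toNNReal _ (by simpa using hC.dotProduct_mulVec_nonneg a)]

lemma integrable_sq_dotProduct_mul_sq (hμ : IsCenteredGaussianWithCov μ C) (a b : ι → ℝ) :
    Integrable (fun x => (a ⬝ᵥ x) ^ 2 * (b ⬝ᵥ x) ^ 2) μ := by
  simp only [sq_dotProduct_mul_sq_eq a b]
  have hint := hμ.integrable_dotProduct_pow_four
  exact ((((hint _).add (hint _)).sub ((hint a).const_mul 2)).sub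
    ((hint b).const_mul 2)).div_const 12

lemma integral_sq_dotProduct_mul_sq (hμ : IsCenteredGaussianWithCov μ C) (hC : C.PosSemidef)
    (a b : ι → ℝ) :
    ∫ x, (a ⬝ᵥ x) ^ 2 * (b ⬝ᵥ x) ^ 2 ∂μ
      = (a ⬝ᵥ C *ᵥ a) * (b ⬝ᵥ C *ᵥ b) + 2 * (a ⬝ᵥ C *ᵥ b) ^ 2 := by
  have hint := hμ.integrable_dotProduct_pow_four
  simp only [sq_dotProduct_mul_sq_eq a b]
  rw [integral_div, integral_sub, integral_sub, integral_add, integral_const_mul,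
    integral_const_mul]
  · have hadd : (a + b) ⬝ᵥ C *ᵥ (a + b) = a ⬝ᵥ C *ᵥ a + 2 * (a ⬝ᵥ C *ᵥ b) + b ⬝ᵥ C *ᵥ b := by
      rw [mulVec_add, dotProduct_add, add_dotProduct, add_dotProduct, hC.dotProduct_mulVec_comm b a]
      ring
    have hsub : (a - b) ⬝ᵥ C *ᵥ (a - b) = a ⬝ᵥ C *ᵥ a - 2 * (a ⬝ᵥ C *ᵥ b) + b ⬝ᵥ C *ᵥ b := by
      rw [mulVec_sub, dotProduct_sub, sub_dotProduct, sub_dotProduct, hC.dotProduct_mulVec_comm b a]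
      ring
    simp only [hμ.integral_dotProduct_pow_four hC, hadd, hsub]
    ring
  all_goals first | exact hint _ | fun_prop

lemma integral_sq_dotProduct_mul_diagonal_mul_transpose_mulVec
    (hμ : IsCenteredGaussianWithCov μ C) (hC : C.PosSemidef) {κ : Type*} [Fintype κ]
    [DecidableEq κ] (A : Matrix ι κ ℝ) (s : κ → ℝ) :
    ∫ x, (x ⬝ᵥ (A * diagonal s * Aᵀ) *ᵥ x) ^ 2 ∂μ
      = (A * diagonal s * Aᵀ * C).trace ^ 2
        + 2 * (A * diagonal s * Aᵀ * C * (A * diagonal s * Aᵀ * C)).trace := by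
  have hsq : ∀ x, (x ⬝ᵥ (A * diagonal s * Aᵀ) *ᵥ x) ^ 2
      = ∑ k, ∑ l, s k * s l * ((Aᵀ k ⬝ᵥ x) ^ 2 * (Aᵀ l ⬝ᵥ x) ^ 2) := by
    intro x
    rw [dotProduct_mul_diagonal_mul_transpose_mulVec, sq, Finset.sum_mul_sum]
    exact Finset.sum_congr rfl fun k _ => Finset.sum_congr rfl fun l _ => by ring
  have hint : ∀ k l, Integrable
      (fun x => s k * s l * ((Aᵀ k ⬝ᵥ x) ^ 2 * (Aᵀ l ⬝ᵥ x) ^ 2)) μ :=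
    fun k l => (hμ.integrable_sq_dotProduct_mul_sq _ _).const_mul _
  have hsymm : ∀ k l, (Aᵀ * C * A) l k = (Aᵀ * C * A) k l := fun k l => by
    simp only [transpose_mul_mul_apply, hC.dotProduct_mulVec_comm (Aᵀ l)]
  simp_rw [hsq]
  rw [integral_finsetSum _ fun k _ => integrable_finsetSum _ fun l _ => hint k l]
  simp_rw [integral_finsetSum _ fun l _ => hint _ l, integral_const_mul,
    hμ.integral_sq_dotProduct_mul_sq hC, ← transpose_mul_mul_apply,
    trace_mul_diagonal_mul_transpose_mul, trace_mul_diagonal_mul_transpose_mul_sq]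
  rw [sq, Finset.sum_mul_sum, Finset.mul_sum, ← Finset.sum_add_distrib]
  refine Finset.sum_congr rfl fun k _ => ?_
  rw [Finset.mul_sum, ← Finset.sum_add_distrib]
  refine Finset.sum_congr rfl fun l _ => ?_
  rw [hsymm k l]
  ring

lemma integral_sq_dotProduct_mulVec (hμ : IsCenteredGaussianWithCov μ C) (hC : C.PosSemidef)
    [DecidableEq ι] {Δ : Matrix ι ι ℝ} (hΔ : Δ.IsSymm) :
    ∫ x, (x ⬝ᵥ Δ *ᵥ x) ^ 2 ∂μ = (Δ * C).trace ^ 2 + 2 * (Δ * C * (Δ * C)).trace := by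
  obtain ⟨A, s, rfl⟩ := hΔ.exists_eq_mul_diagonal_mul_transpose
  exact hμ.integral_sq_dotProduct_mul_diagonal_mul_transpose_mulVec hC A s

end IsCenteredGaussianWithCov

theorem stmt13_general {D d : ℕ} (β γ : ℝ)
    (CF CB : Matrix (Fin D) (Fin D) ℝ) (hCF : CF.PosSemidef) (hCB : CB.PosSemidef)
    (μF μB : Measure (Fin D → ℝ))
    (hGaussF : ∀ v : Fin D → ℝ,
      μF.map (fun x => ∑ i, v i * x i)
        = gaussianReal 0 (Real.toNNReal (v ⬝ᵥ CF.mulVec v)))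
    (hGaussB : ∀ v : Fin D → ℝ,
      μB.map (fun x => ∑ i, v i * x i)
        = gaussianReal 0 (Real.toNNReal (v ⬝ᵥ CB.mulVec v)))
    (V Vstar : Matrix (Fin D) (Fin d) ℝ)
    (Δ : Matrix (Fin D) (Fin D) ℝ) (hΔ : Δ = Vstar * Vstarᵀ - V * Vᵀ) :
    (β * ∫ x, (x ⬝ᵥ Δ.mulVec x) ^ 2 ∂μF
        + (1 - β) * γ ^ 2 * ∫ x, (x ⬝ᵥ Δ.mulVec x) ^ 2 ∂μB)
      - (β * (Δ * CF).trace + (1 - β) * γ * (Δ * CB).trace) ^ 2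
    = (β - β ^ 2) * (Δ * CF).trace ^ 2
      + γ ^ 2 * (β - β ^ 2) * (Δ * CB).trace ^ 2
      + 2 * β * (Δ * CF * (Δ * CF)).trace
      + 2 * γ ^ 2 * (1 - β) * (Δ * CB * (Δ * CB)).trace
      - 2 * γ * β * (1 - β) * (Δ * CF).trace * (Δ * CB).trace := by
  have hF : IsCenteredGaussianWithCov μF CF := hGaussF
  have hB : IsCenteredGaussianWithCov μB CB := hGaussB
  have hΔsymm : Δ.IsSymm := by
    rw [hΔ, IsSymm, transpose_sub, transpose_mul, transpose_mul, transpose_transpose,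
      transpose_transpose]
  rw [hF.integral_sq_dotProduct_mulVec hCF hΔsymm, hB.integral_sq_dotProduct_mulVec hCB hΔsymm]
  ring

/-- The Gibbs-posterior variance term for CPCA under the Gaussian mixture
`P = β N(0,C_F) + (1-β) N(0,C_B)`:  with `Δ = V*V*ᵀ - VVᵀ`,
`v(θ,θ*) = E_P[(l_θ - l_{θ*})²] - m(θ,θ*)²` equals
`(β-β²)tr(ΔC_F)² + γ²(β-β²)tr(ΔC_B)² + 2β tr(ΔC_FΔC_F) + 2γ²(1-β)tr(ΔC_BΔC_B)
  - 2γβ(1-β)tr(ΔC_F)tr(ΔC_B)`, where `m = β tr(ΔC_F) + (1-β)γ tr(ΔC_B)`. -/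
theorem stmt13 {D d : ℕ} (β γ : ℝ) (hβ0 : 0 < β) (hβ1 : β < 1) (hγ : 0 ≤ γ)
    (CF CB : Matrix (Fin D) (Fin D) ℝ) (hCF : CF.PosSemidef) (hCB : CB.PosSemidef)
    (μF μB : Measure (Fin D → ℝ))
    [IsProbabilityMeasure μF] [IsProbabilityMeasure μB]
    (hGaussF : ∀ v : Fin D → ℝ,
      μF.map (fun x => ∑ i, v i * x i)
        = gaussianReal 0 (Real.toNNReal (v ⬝ᵥ CF.mulVec v)))
    (hGaussB : ∀ v : Fin D → ℝ,
      μB.map (fun x => ∑ i, v i * x i)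
        = gaussianReal 0 (Real.toNNReal (v ⬝ᵥ CB.mulVec v)))
    (V Vstar : Matrix (Fin D) (Fin d) ℝ)
    (hV : Vᵀ * V = 1) (hVstar : Vstarᵀ * Vstar = 1)
    (Δ : Matrix (Fin D) (Fin D) ℝ) (hΔ : Δ = Vstar * Vstarᵀ - V * Vᵀ) :
    (β * ∫ x, (x ⬝ᵥ Δ.mulVec x) ^ 2 ∂μF
        + (1 - β) * γ ^ 2 * ∫ x, (x ⬝ᵥ Δ.mulVec x) ^ 2 ∂μB)
      - (β * (Δ * CF).trace + (1 - β) * γ * (Δ * CB).trace) ^ 2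
    = (β - β ^ 2) * (Δ * CF).trace ^ 2
      + γ ^ 2 * (β - β ^ 2) * (Δ * CB).trace ^ 2
      + 2 * β * (Δ * CF * (Δ * CF)).trace
      + 2 * γ ^ 2 * (1 - β) * (Δ * CB * (Δ * CB)).trace
      - 2 * γ * β * (1 - β) * (Δ * CF).trace * (Δ * CB).trace :=
  stmt13_general β γ CF CB hCF hCB μF μB hGaussF hGaussB V Vstar Δ hΔ
end

section
/- Let $C_X, C_Y$ be symmetric positive semidefinite matrices with descending eigenvalues $(\mu_i)$ and $(\rho_i)$, and set $C = C_X - \gamma C_Y$. If $\gamma < \frac{\sum_{i=d+1}^D \mu_i}{(D-d)\rho_1}$, then $\sum_{i=d+1}^D \lambda_i(C) > 0$, where $\lambda_i(C)$ denotes the $i$-th largest eigenvalue of $C$. -/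
/-!
Let `Q` be the orthogonal projection onto the eigenvectors of `C` belonging to its `D - d`
smallest eigenvalues, so that the tail sum is `tr (C Q) = tr (C_X Q) - γ tr (C_Y Q)`.
In any orthonormal basis the diagonal of `Q` lies in `[0, 1]` and sums to `D - d`. Written in an
eigenbasis of `C_X`, this makes `tr (C_X Q)` a weighted sum of the `μ_i` that is at least the sum
of the `D - d` smallest ones (Ky Fan), and in an eigenbasis of `C_Y` it gives
`tr (C_Y Q) ≤ ρ_1 (D - d)`.
-/

open Matrix Finset

theorem Antitone.sum_Ici_le_sum_mul {α : Type*} [Fintype α] [LinearOrder α]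
    [LocallyFiniteOrderTop α] {μ t : α → ℝ} (hμ : Antitone μ) (a : α)
    (ht₀ : ∀ i, 0 ≤ t i) (ht₁ : ∀ i, t i ≤ 1) (ht : ∑ i, t i = #(Ici a)) :
    ∑ i ∈ Ici a, μ i ≤ ∑ i, μ i * t i := by
  -- compare termwise with `μ a * (t i - 𝟙[a ≤ i])`, whose sum vanishes
  have key : ∀ i, μ a * (t i - if i ∈ Ici a then 1 else 0)
      ≤ μ i * t i - if i ∈ Ici a then μ i else 0 := by
    intro i
    by_cases hi : a ≤ i
    · have := hμ hi
      simp only [mem_Ici, hi, if_true]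
      nlinarith [ht₁ i]
    · have := hμ (le_of_not_ge hi)
      simp only [mem_Ici, hi, if_false]
      nlinarith [ht₀ i]
  have hzero : ∑ i, μ a * (t i - if i ∈ Ici a then 1 else 0) = 0 := by
    rw [← mul_sum, sum_sub_distrib, ht, sum_boole, filter_mem_eq_inter, univ_inter, sub_self,
      mul_zero]
  have := sum_le_sum fun i (_ : i ∈ univ) => key i
  rwa [hzero, sum_sub_distrib, sum_ite_mem, univ_inter, sub_nonneg] at this

namespace Matrix

variable {n : Type*} [Fintype n] [DecidableEq n]

theorem one_sub_conj_unitary {U : Matrix n n ℝ} (hU : U ∈ unitaryGroup n ℝ)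
    (M : Matrix n n ℝ) :
    1 - U * M * star U = U * (1 - M) * star U := by
  rw [mul_sub, sub_mul, mul_one, mem_unitaryGroup_iff.mp hU]

theorem trace_star_conj_unitary {U : Matrix n n ℝ} (hU : U ∈ unitaryGroup n ℝ)
    (M : Matrix n n ℝ) : (star U * M * U).trace = M.trace := by
  rw [trace_mul_cycle, mem_unitaryGroup_iff.mp hU, one_mul]

theorem diag_star_conj_le_one_of_posSemidef_one_sub {Q : Matrix n n ℝ} (h1Q : (1 - Q).PosSemidef)
    {U : Matrix n n ℝ} (hU : U ∈ unitaryGroup n ℝ) (j : n) : (star U * Q * U) j j ≤ 1 := by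
  have := (h1Q.conjTranspose_mul_mul_same U).diag_nonneg (i := j)
  have hconj := one_sub_conj_unitary (Unitary.star_mem hU) Q
  rw [star_star] at hconj
  rw [← star_eq_conjTranspose, ← hconj] at this
  simpa using this

namespace IsHermitian

variable {A : Matrix n n ℝ}

theorem trace_mul_eq_sum_eigenvalues_mul (hA : A.IsHermitian) (Q : Matrix n n ℝ) :
    (A * Q).trace = ∑ j, hA.eigenvalues j *
      (star (hA.eigenvectorUnitary : Matrix n n ℝ) * Q * hA.eigenvectorUnitary) j j := by
  set U : Matrix n n ℝ := ↑hA.eigenvectorUnitary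
  have hA' : A = U * diagonal hA.eigenvalues * star U := by
    simpa [Function.comp_def] using hA.spectral_theorem
  calc (A * Q).trace = (diagonal hA.eigenvalues * (star U * Q * U)).trace := by
        conv_lhs => rw [hA']
        rw [mul_assoc, mul_assoc, trace_mul_comm, mul_assoc, mul_assoc]
    _ = _ := by simp [trace, diagonal_mul]

theorem sum_Ici_le_trace_mul {α : Type*} [Fintype α] [LinearOrder α] [LocallyFiniteOrderTop α]
    (hA : A.IsHermitian) {μ : α → ℝ} (hμ : Antitone μ) (e : α ≃ n)
    (he : ∀ i, hA.eigenvalues (e i) = μ i) {Q : Matrix n n ℝ} (hQ : Q.PosSemidef)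
    (h1Q : (1 - Q).PosSemidef) (a : α) (htr : Q.trace = #(Ici a)) :
    ∑ i ∈ Ici a, μ i ≤ (A * Q).trace := by
  have hU := hA.eigenvectorUnitary.2
  set t : n → ℝ := fun j => (star (hA.eigenvectorUnitary : Matrix n n ℝ) * Q *
    hA.eigenvectorUnitary) j j
  have ht : ∑ i, t (e i) = #(Ici a) := by
    rw [e.sum_comp, ← htr, ← trace_star_conj_unitary hU]
    rfl
  rw [hA.trace_mul_eq_sum_eigenvalues_mul, ← e.sum_comp]
  simp_rw [he]
  exact hμ.sum_Ici_le_sum_mul a (fun _ => (hQ.conjTranspose_mul_mul_same _).diag_nonneg)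
    (fun _ => diag_star_conj_le_one_of_posSemidef_one_sub h1Q hU _) ht

theorem trace_mul_le (hA : A.IsHermitian) {c : ℝ} (hc : ∀ j, hA.eigenvalues j ≤ c)
    {Q : Matrix n n ℝ} (hQ : Q.PosSemidef) : (A * Q).trace ≤ c * Q.trace := by
  have hU := hA.eigenvectorUnitary.2
  set U : Matrix n n ℝ := ↑hA.eigenvectorUnitary
  calc (A * Q).trace ≤ ∑ j, c * (star U * Q * U) j j := by
        rw [hA.trace_mul_eq_sum_eigenvalues_mul]
        gcongr with j
        · exact (hQ.conjTranspose_mul_mul_same _).diag_nonneg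
        · exact hc j
    _ = c * Q.trace := by
        rw [← mul_sum, ← trace_star_conj_unitary hU]
        rfl

noncomputable def eigenprojection (hA : A.IsHermitian) (s : Finset n) : Matrix n n ℝ :=
  (hA.eigenvectorUnitary : Matrix n n ℝ) * diagonal (fun j => if j ∈ s then 1 else 0) *
    star (hA.eigenvectorUnitary : Matrix n n ℝ)

theorem posSemidef_eigenprojection (hA : A.IsHermitian) (s : Finset n) :
    (hA.eigenprojection s).PosSemidef :=
  (PosSemidef.diagonal fun j => by dsimp only; split_ifs <;> norm_num).mul_mul_conjTranspose_same _

theorem posSemidef_one_sub_eigenprojection (hA : A.IsHermitian) (s : Finset n) :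
    (1 - hA.eigenprojection s).PosSemidef := by
  rw [eigenprojection, one_sub_conj_unitary hA.eigenvectorUnitary.2, ← diagonal_one,
    diagonal_sub]
  exact (PosSemidef.diagonal fun j => by dsimp only; split_ifs <;> norm_num)
    |>.mul_mul_conjTranspose_same _

theorem trace_eigenprojection (hA : A.IsHermitian) (s : Finset n) :
    (hA.eigenprojection s).trace = #s := by
  rw [eigenprojection, trace_mul_cycle, mem_unitaryGroup_iff'.mp hA.eigenvectorUnitary.2, one_mul,
    trace_diagonal, sum_boole, filter_mem_eq_inter, univ_inter]

theorem trace_mul_eigenprojection (hA : A.IsHermitian) (s : Finset n) :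
    (A * hA.eigenprojection s).trace = ∑ j ∈ s, hA.eigenvalues j := by
  have hU := mem_unitaryGroup_iff'.mp hA.eigenvectorUnitary.2
  rw [hA.trace_mul_eq_sum_eigenvalues_mul, eigenprojection, ← mul_assoc, ← mul_assoc, hU,
    one_mul, mul_assoc, hU, mul_one]
  simp [diagonal_apply_eq]

end IsHermitian
end Matrix

/-- Indices are zero-based: the paper's `i = d + 1, …, D` is `i ≥ d` here, and `ρ_1` is
`ρ ⟨0, hD⟩`. -/
theorem stmt19_general {D : ℕ} (hD : 0 < D) (d : ℕ) (hd : d < D)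
    (CX CY : Matrix (Fin D) (Fin D) ℝ)
    (hX : CX.PosSemidef) (hY : CY.PosSemidef)
    (γ : ℝ) (hγ : 0 ≤ γ)
    (hCH : (CX - γ • CY).IsHermitian)
    (μ ρ lam : Fin D → ℝ)
    (hμa : Antitone μ) (hρa : Antitone ρ)
    (hμe : ∃ e : Equiv.Perm (Fin D), ∀ i, hX.1.eigenvalues (e i) = μ i)
    (hρe : ∃ e : Equiv.Perm (Fin D), ∀ i, hY.1.eigenvalues (e i) = ρ i)
    (hlame : ∃ e : Equiv.Perm (Fin D), ∀ i, hCH.eigenvalues (e i) = lam i)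
    (hγlt : γ < (∑ i ∈ Finset.univ.filter fun i : Fin D => d ≤ (i : ℕ), μ i)
      / (((D : ℝ) - d) * ρ ⟨0, hD⟩)) :
    0 < ∑ i ∈ Finset.univ.filter fun i : Fin D => d ≤ (i : ℕ), lam i := by
  obtain ⟨eX, hXe⟩ := hμe
  obtain ⟨eY, hYe⟩ := hρe
  obtain ⟨eC, hCe⟩ := hlame
  have htail : (univ.filter fun i : Fin D => d ≤ (i : ℕ)) = Ici ⟨d, hd⟩ := by
    ext i
    simp [Fin.le_def]
  have hcard : (#(Ici (⟨d, hd⟩ : Fin D)) : ℝ) = D - d := by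
    simp [Fin.card_Ici, Nat.cast_sub hd.le]
  rw [htail] at hγlt ⊢
  set Q := hCH.eigenprojection ((Ici ⟨d, hd⟩).map eC.toEmbedding)
  have htrQ : Q.trace = D - d := by
    rw [hCH.trace_eigenprojection, card_map, hcard]
  have hC : ∑ i ∈ Ici ⟨d, hd⟩, lam i = ((CX - γ • CY) * Q).trace := by
    simp [Q, hCH.trace_mul_eigenprojection, hCe]
  have hXQ : ∑ i ∈ Ici ⟨d, hd⟩, μ i ≤ (CX * Q).trace :=
    hX.1.sum_Ici_le_trace_mul hμa eX hXe (hCH.posSemidef_eigenprojection _)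
      (hCH.posSemidef_one_sub_eigenprojection _) _ (htrQ.trans hcard.symm)
  have hYQ : (CY * Q).trace ≤ ρ ⟨0, hD⟩ * (D - d) := by
    refine htrQ ▸ hY.1.trace_mul_le (fun j => ?_) (hCH.posSemidef_eigenprojection _)
    rw [← eY.apply_symm_apply j, hYe]
    exact hρa (show (⟨0, hD⟩ : Fin D) ≤ eY.symm j from Nat.zero_le _)
  have hden : 0 < ((D : ℝ) - d) * ρ ⟨0, hD⟩ := by
    have hρ₀ : 0 ≤ ρ ⟨0, hD⟩ := hYe ⟨0, hD⟩ ▸ hY.eigenvalues_nonneg _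
    refine mul_pos (sub_pos.mpr (by exact_mod_cast hd)) ?_
    refine hρ₀.lt_of_ne fun h => ?_
    rw [← h, mul_zero, div_zero] at hγlt
    exact hγ.not_gt hγlt
  rw [lt_div_iff₀ hden] at hγlt
  rw [hC, sub_mul, trace_sub, smul_mul_assoc, trace_smul, smul_eq_mul]
  nlinarith [mul_le_mul_of_nonneg_left hYQ hγ]

/-- If `γ < (∑_{i>d} μ_i) / ((D-d) ρ_1)`, then the tail eigenvalue sum
`∑_{i>d} λ_i(C_X - γ C_Y)` is positive (eigenvalues in descending order, zero-based:
the tail ranges over indices `i ≥ d`). -/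
theorem stmt19 {D : ℕ} (hD : 0 < D) (d : ℕ) (hd : d < D)
    (CX CY : Matrix (Fin D) (Fin D) ℝ)
    (hX : CX.PosSemidef) (hY : CY.PosSemidef)
    (γ : ℝ) (hγ : 0 ≤ γ)
    (hCH : (CX - γ • CY).IsHermitian)
    (μ ρ lam : Fin D → ℝ)
    (hμa : Antitone μ) (hρa : Antitone ρ) (hlama : Antitone lam)
    (hμe : ∃ e : Equiv.Perm (Fin D), ∀ i, hX.1.eigenvalues (e i) = μ i)
    (hρe : ∃ e : Equiv.Perm (Fin D), ∀ i, hY.1.eigenvalues (e i) = ρ i)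
    (hlame : ∃ e : Equiv.Perm (Fin D), ∀ i, hCH.eigenvalues (e i) = lam i)
    (hγlt : γ < (∑ i ∈ Finset.univ.filter fun i : Fin D => d ≤ (i : ℕ), μ i)
      / (((D : ℝ) - d) * ρ ⟨0, hD⟩)) :
    0 < ∑ i ∈ Finset.univ.filter fun i : Fin D => d ≤ (i : ℕ), lam i :=
  stmt19_general hD d hd CX CY hX hY γ hγ hCH μ ρ lam hμa hρa hμe hρe hlame hγlt
end
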